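/- Fusion correctness of the sequential nested permutation-combination generator: for all K D : ℕ with K ≥ 1 and 2 ≤ D, and every list xs : List α, (a) the first component of nestedPerms K D xs equals setEmpty D (kcombs D xs); and (b) for every k ≤ K, the k-th entry of the second component of nestedPerms K D xs is a permutation of the k-th entry of kperms K ((kcombs D xs)[D]); that is, the fused recursive generator produces exactly the k-permutations (for all k ≤ K) of the list of all D-combinations of xs. -/

import Mathlib

variable {α : Type*}

/-- Cross-join: concatenate each element of `xss` with each element of `yss`. -/
def cross (xss yss : List (List α)) : List (List α) :=
  xss.flatMap (fun x => yss.map (fun y => x ++ y))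

/-- Discrete convolution of two lists of blocks under `cross`: the k-th entry is
the concatenation over j = 0,…,k of `cross (xss[k-j]) (yss[j])`. -/
def convol (xss yss : List (List (List α))) : List (List (List α)) :=
  (List.range xss.length).map (fun k =>
    (List.range (k + 1)).flatMap (fun j => cross (xss.getD (k - j) []) (yss.getD j [])))

/-- One sequential step of the K-combination generator (for `css` of length K+1). -/
def forStep (x : α) (css : List (List (List α))) : List (List (List α)) :=
  [[[]]] ++ (List.range (css.length - 1)).map
    (fun i => (css.getD i []).map (x :: ·) ++ css.getD (i + 1) [])

/-- Sequential K-combination generator. -/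
def kcombs (K : ℕ) : List α → List (List (List α))
  | [] => [[[]]] ++ List.replicate K []
  | x :: xs => forStep x (kcombs K xs)

def single (x : α) (K : ℕ) : List (List (List α)) :=
  [[[]], [[x]]] ++ List.replicate (K - 1) []

/-- All interleavings of two lists, preserving the relative order of each. -/
def interleave : List α → List α → List (List α)
  | xs, [] => [xs]
  | [], ys => [ys]
  | x :: xs, y :: ys =>
      (interleave xs (y :: ys)).map (x :: ·) ++ (interleave (x :: xs) ys).map (y :: ·)

/-- Merge: all interleavings of elements of `xss` with elements of `yss`. -/
def merge (xss yss : List (List α)) : List (List α) :=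
  xss.flatMap (fun x => yss.flatMap (fun y => interleave x y))

/-- Discrete convolution of two lists of blocks under `merge`. -/
def convolM (xss yss : List (List (List α))) : List (List (List α)) :=
  (List.range xss.length).map (fun k =>
    (List.range (k + 1)).flatMap (fun j => merge (xss.getD (k - j) []) (yss.getD j [])))

/-- Sequential K-permutation generator. -/
def kperms (K : ℕ) : List α → List (List (List α))
  | [] => [[[]]] ++ List.replicate K []
  | x :: xs => convolM (single x K) (kperms K xs)

/-- Replace the D-th entry (0-indexed) of `css` by the empty list. -/
def setEmpty (Dd : ℕ) (css : List (List (List α))) : List (List (List α)) :=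
  css.set Dd []

/-- Sequential nested (K,D) permutation-combination generator. -/
def nestedPerms (K Dd : ℕ) : List α → List (List (List α)) × List (List (List (List α)))
  | [] => ([[[]]] ++ List.replicate Dd [], [[[]]] ++ List.replicate K [])
  | x :: xs =>
      let p := nestedPerms K Dd xs
      let css := forStep x p.1
      (setEmpty Dd css,
        if (css.getD Dd []).isEmpty then [[[]]] ++ List.replicate K []
        else convolM p.2 (kperms K (css.getD Dd [])))

section Helpers
variable {α : Type*} {β : Type*}

theorem interleave_nil_left (ys : List α) : interleave [] ys = [ys] := by
  cases ys <;> simp [interleave]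

theorem interleave_nil_right (xs : List α) : interleave xs [] = [xs] := by
  cases xs <;> simp [interleave]

theorem interleave_cons_cons (x y : α) (xs ys : List α) :
    interleave (x :: xs) (y :: ys)
      = (interleave xs (y :: ys)).map (x :: ·) ++ (interleave (x :: xs) ys).map (y :: ·) := by
  simp [interleave]

theorem interleave_comm : ∀ (xs ys : List α), (interleave xs ys).Perm (interleave ys xs)
  | [], ys => by rw [interleave_nil_left, interleave_nil_right]
  | x :: xs, [] => by rw [interleave_nil_left, interleave_nil_right]
  | x :: xs, y :: ys => by
      rw [interleave_cons_cons, interleave_cons_cons]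
      exact (((interleave_comm xs (y :: ys)).map _).append
        ((interleave_comm (x :: xs) ys).map _)).trans List.perm_append_comm

theorem coe_flatMap_split (l : List (List α)) (f g : List α → List (List α)) :
    ((l.flatMap fun a => f a ++ g a : List (List α)) : Multiset (List α))
      = ↑(l.flatMap f) + ↑(l.flatMap g) := by
  rw [Multiset.coe_add, Multiset.coe_eq_coe]
  exact (List.flatMap_append_perm l f g).symm

theorem interleave_single (b : α) : ∀ t s : List α,
    ((interleave [b] s).flatMap (fun s' => interleave t s')).Perm
      ((interleave t s).flatMap (fun u => interleave [b] u))
  | [], s => by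
      simp [interleave_nil_left]
  | y :: t', [] => by
      simp [interleave_nil_right, interleave_nil_left]
      exact interleave_comm _ _
  | y :: t', z :: s' => by
      have IH1 := interleave_single b t' (z :: s')
      have IH2 := interleave_single b (y :: t') s'
      simp only [interleave_cons_cons, interleave_nil_left, List.flatMap_cons, List.flatMap_append,
        List.flatMap_map, List.map_append, List.map_map, List.map_cons, List.map_nil,
        List.flatMap_nil, List.append_nil, List.nil_append] at IH1 IH2 ⊢
      have IH1' := IH1.map (y :: ·)
      have IH2' := IH2.map (z :: ·)
      simp only [List.map_append] at IH1'
      rw [← Multiset.coe_eq_coe] at IH1' IH2' ⊢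
      simp only [coe_flatMap_split, ← Multiset.coe_add, ← List.map_flatMap,
        ← List.map_eq_flatMap, Function.comp_def] at IH1' IH2' ⊢
      rw [← IH1', ← IH2']
      abel
  termination_by t s => (t.length, s.length)

end Helpers
section Helpers3
variable {α : Type*} {β : Type*} {γ : Type*}

theorem coe_flatMap_split' (l : List β) (f g : β → List γ) :
    ((l.flatMap fun a => f a ++ g a : List γ) : Multiset γ)
      = ↑(l.flatMap f) + ↑(l.flatMap g) := by
  rw [Multiset.coe_add, Multiset.coe_eq_coe]
  exact (List.flatMap_append_perm l f g).symm

theorem flatMap_congr' {l : List β} {f g : β → List γ} (h : ∀ a ∈ l, f a = g a) :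
    l.flatMap f = l.flatMap g := by
  induction l with
  | nil => rfl
  | cons a l ih => simp_all

theorem merge_nil_right (xss : List (List α)) : merge xss [] = [] := by simp [merge]

theorem merge_singleton_nil_left (yss : List (List α)) : merge [[]] yss = yss := by
  simp [merge, interleave_nil_left]

theorem merge_nil_mem_right (xss : List (List α)) : merge xss [[]] = xss := by
  simp [merge, interleave_nil_right]

theorem merge_single_left (b : α) (yss : List (List α)) :
    merge [[b]] yss = yss.flatMap (fun y => interleave [b] y) := by simp [merge]

theorem merge_append_right_perm (X U V : List (List α)) :
    (merge X (U ++ V)).Perm (merge X U ++ merge X V) := by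
  simp only [merge, List.flatMap_append]
  exact (List.flatMap_append_perm X _ _).symm

theorem merge_flatMap_single (b : α) (T S : List (List α)) :
    (merge T (S.flatMap (fun s => interleave [b] s))).Perm
      ((merge T S).flatMap (fun u => interleave [b] u)) := by
  simp only [merge, List.flatMap_assoc]
  refine List.Perm.flatMap_left _ (fun t _ => ?_)
  exact List.Perm.flatMap_left _ (fun s _ => interleave_single b t s)

theorem getD_replicate' (c : β) : ∀ n i, (List.replicate n c).getD i c = c
  | 0, _ => rfl
  | n+1, 0 => rfl
  | n+1, i+1 => getD_replicate' c n i

theorem kperms_nil_getD_zero (K : ℕ) : (kperms K ([] : List α)).getD 0 [] = [[]] := by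
  simp [kperms]

theorem kperms_nil_getD_succ (K j : ℕ) : (kperms K ([] : List α)).getD (j+1) [] = [] := by
  show (([[]] : List (List α)) :: List.replicate K []).getD (j+1) [] = []
  exact getD_replicate' _ K j

theorem kperms_length (K : ℕ) (hK : 1 ≤ K) : ∀ ys : List α, (kperms K ys).length = K + 1
  | [] => by simp [kperms]
  | y :: ys => by
      simp [kperms, convolM, single]
      omega

theorem convolM_getD (P Q : List (List (List α))) (k : ℕ) (h : k < P.length) :
    (convolM P Q).getD k []
      = (List.range (k+1)).flatMap (fun j => merge (P.getD (k-j) []) (Q.getD j [])) := by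
  have h' : k < ((List.range P.length).map (fun k =>
      (List.range (k + 1)).flatMap (fun j => merge (P.getD (k - j) []) (Q.getD j [])))).length := by
    simpa using h
  rw [convolM, List.getD_eq_getElem _ _ h', List.getElem_map, List.getElem_range]

theorem single_getD_zero (b : α) (K : ℕ) : (single b K).getD 0 [] = [[]] := rfl
theorem single_getD_one (b : α) (K : ℕ) : (single b K).getD 1 [] = [[b]] := rfl
theorem single_getD_ge2 (b : α) (K : ℕ) : ∀ m, 2 ≤ m → (single b K).getD m [] = []
  | m+2, _ => getD_replicate' _ (K-1) m

theorem single_length (b : α) (K : ℕ) (hK : 1 ≤ K) : (single b K).length = K + 1 := by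
  simp only [single, List.length_append, List.length_cons, List.length_nil,
    List.length_replicate]
  omega

theorem kperms_cons (K : ℕ) (b : α) (ys : List α) :
    kperms K (b :: ys) = convolM (single b K) (kperms K ys) := by simp [kperms]

theorem kperms_cons_getD_zero (K : ℕ) (hK : 1 ≤ K) (b : α) (ys : List α) :
    (kperms K (b :: ys)).getD 0 [] = (kperms K ys).getD 0 [] := by
  rw [kperms_cons, convolM_getD _ _ 0 (by rw [single_length b K hK]; omega)]
  rw [show List.range 1 = [0] from rfl]
  simp only [List.flatMap_cons, List.flatMap_nil, List.append_nil, Nat.sub_zero,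
    single_getD_zero, merge_singleton_nil_left]

theorem kperms_cons_getD_succ (K : ℕ) (hK : 1 ≤ K) (b : α) (ys : List α) (k : ℕ)
    (hk : k + 1 ≤ K) :
    (kperms K (b :: ys)).getD (k+1) []
      = ((kperms K ys).getD k []).flatMap (fun u => interleave [b] u)
          ++ (kperms K ys).getD (k+1) [] := by
  rw [kperms_cons, convolM_getD _ _ (k+1) (by rw [single_length b K hK]; omega)]
  have hr : List.range (k+2) = List.range k ++ [k, k+1] := by
    rw [List.range_succ, List.range_succ, List.append_assoc]
    rfl
  rw [hr, List.flatMap_append]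
  have h1 : (List.range k).flatMap
      (fun j => merge ((single b K).getD (k+1-j) []) ((kperms K ys).getD j [])) = [] := by
    refine List.flatMap_eq_nil_iff.mpr (fun j hj => ?_)
    rw [single_getD_ge2 b K _ (by have := List.mem_range.mp hj; omega)]
    rfl
  rw [h1, List.nil_append]
  have e1 : k + 1 - k = 1 := by omega
  have e2 : k + 1 - (k+1) = 0 := by omega
  simp only [List.flatMap_cons, List.flatMap_nil, List.append_nil, e1, e2,
    single_getD_one, single_getD_zero, merge_single_left, merge_singleton_nil_left]

end Helpers3
section Helpers4
variable {α : Type*}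

theorem convolM_kperms (K : ℕ) (hK : 1 ≤ K) :
    ∀ (B A : List α) (P : List (List (List α))), P.length = K + 1 →
      (∀ j, j ≤ K → (P.getD j []).Perm ((kperms K A).getD j [])) →
      ∀ k, k ≤ K → ((convolM P (kperms K B)).getD k []).Perm ((kperms K (B ++ A)).getD k [])
  | [], A, P, hP, hPA, k, hk => by
      rw [convolM_getD _ _ k (by omega), List.range_succ_eq_map, List.flatMap_cons,
        List.flatMap_map]
      have h1 : (List.range k).flatMap (fun j =>
          merge (P.getD (k - (j+1)) []) ((kperms K ([] : List α)).getD (j+1) [])) = [] := by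
        refine List.flatMap_eq_nil_iff.mpr (fun j _ => ?_)
        rw [kperms_nil_getD_succ, merge_nil_right]
      rw [h1, List.append_nil, Nat.sub_zero, kperms_nil_getD_zero, merge_nil_mem_right,
        List.nil_append]
      exact hPA k hk
  | b :: B', A, P, hP, hPA, k, hk => by
      have key := convolM_kperms K hK B' A P hP hPA
      have l0 : ∀ Q : List (List (List α)),
          (convolM P Q).getD 0 [] = merge (P.getD 0 []) (Q.getD 0 []) := by
        intro Q
        rw [convolM_getD _ _ 0 (by omega), show List.range 1 = [0] from rfl]
        simp only [List.flatMap_cons, List.flatMap_nil, List.append_nil, Nat.sub_zero]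
      cases k with
      | zero =>
          have k0 := key 0 (by omega)
          rw [l0] at k0 ⊢
          rw [kperms_cons_getD_zero K hK b B', List.cons_append,
            kperms_cons_getD_zero K hK b (B' ++ A)]
          exact k0
      | succ k' =>
          have ck' := key k' (by omega)
          have ck1 := key (k'+1) hk
          have rhs : (kperms K ((b :: B') ++ A)).getD (k'+1) []
              = ((kperms K (B'++A)).getD k' []).flatMap (fun u => interleave [b] u)
                ++ (kperms K (B'++A)).getD (k'+1) [] := by
            rw [List.cons_append, kperms_cons_getD_succ K hK b (B'++A) k' hk]
          have hsub : ∀ j : ℕ, k' + 1 - (j+1) = k' - j := fun j => by omega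
          have lhs : (convolM P (kperms K (b :: B'))).getD (k'+1) []
              = merge (P.getD (k'+1) []) ((kperms K B').getD 0 [])
                ++ (List.range (k'+1)).flatMap (fun j =>
                    merge (P.getD (k'-j) [])
                      (((kperms K B').getD j []).flatMap (fun u => interleave [b] u)
                        ++ (kperms K B').getD (j+1) [])) := by
            rw [convolM_getD _ _ _ (by omega), List.range_succ_eq_map, List.flatMap_cons,
              List.flatMap_map, Nat.sub_zero, kperms_cons_getD_zero K hK b B']
            congr 1
            refine flatMap_congr' (fun j hj => ?_)
            have hj' : j < k' + 1 := List.mem_range.mp hj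
            rw [kperms_cons_getD_succ K hK b B' j (by omega), hsub j]
          have e1 : (convolM P (kperms K B')).getD k' []
              = (List.range (k'+1)).flatMap (fun j =>
                  merge (P.getD (k'-j) []) ((kperms K B').getD j [])) :=
            convolM_getD _ _ _ (by omega)
          have e2 : (convolM P (kperms K B')).getD (k'+1) []
              = merge (P.getD (k'+1) []) ((kperms K B').getD 0 [])
                ++ (List.range (k'+1)).flatMap (fun j =>
                    merge (P.getD (k'-j) []) ((kperms K B').getD (j+1) [])) := by
            rw [convolM_getD _ _ _ (by omega), List.range_succ_eq_map, List.flatMap_cons,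
              List.flatMap_map, Nat.sub_zero]
            congr 1
            refine flatMap_congr' (fun j hj => ?_)
            rw [hsub j]
          rw [← Multiset.coe_eq_coe, lhs, rhs]
          have split1 : (↑((List.range (k'+1)).flatMap (fun j =>
              merge (P.getD (k'-j) [])
                (((kperms K B').getD j []).flatMap (fun u => interleave [b] u)
                  ++ (kperms K B').getD (j+1) []))) : Multiset (List α))
              = ↑((List.range (k'+1)).flatMap (fun j =>
                  (merge (P.getD (k'-j) []) ((kperms K B').getD j [])).flatMap
                    (fun u => interleave [b] u)))
                + ↑((List.range (k'+1)).flatMap (fun j =>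
                    merge (P.getD (k'-j) []) ((kperms K B').getD (j+1) []))) := by
            rw [← coe_flatMap_split', Multiset.coe_eq_coe]
            refine List.Perm.flatMap_left _ (fun j _ => ?_)
            exact (merge_append_right_perm _ _ _).trans
              ((merge_flatMap_single b _ _).append (List.Perm.refl _))
          simp only [← Multiset.coe_add]
          rw [split1, ← List.flatMap_assoc, ← e1]
          have hX : (↑(((convolM P (kperms K B')).getD k' []).flatMap
              (fun u => interleave [b] u)) : Multiset (List α))
              = ↑(((kperms K (B'++A)).getD k' []).flatMap (fun u => interleave [b] u)) :=
            Multiset.coe_eq_coe.mpr (ck'.flatMap_right _)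
          have e2m : (↑(merge (P.getD (k'+1) []) ((kperms K B').getD 0 [])) : Multiset (List α))
              + ↑((List.range (k'+1)).flatMap (fun j =>
                  merge (P.getD (k'-j) []) ((kperms K B').getD (j+1) [])))
              = ↑((kperms K (B'++A)).getD (k'+1) []) := by
            rw [Multiset.coe_add, ← e2, Multiset.coe_eq_coe]
            exact ck1
          rw [hX, ← e2m]
          abel

end Helpers4
section Helpers5
variable {α : Type*} {β : Type*}

theorem getD_set_ne (l : List β) (i j : ℕ) (a d : β) (h : i ≠ j) :
    (l.set i a).getD j d = l.getD j d := by
  simp [List.getD_eq_getElem?_getD, List.getElem?_set_ne h]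

theorem getD_set_self (l : List β) (i : ℕ) (a d : β) (h : i < l.length) :
    (l.set i a).getD i d = a := by
  simp [List.getD_eq_getElem?_getD, List.getElem?_set_self h]

theorem kcombs_cons (D : ℕ) (x : α) (xs : List α) :
    kcombs D (x :: xs) = forStep x (kcombs D xs) := by simp [kcombs]

theorem kcombs_length (D : ℕ) : ∀ xs : List α, (kcombs D xs).length = D + 1
  | [] => by simp [kcombs]
  | x :: xs => by
      have ih := kcombs_length D xs
      rw [kcombs_cons]
      simp only [forStep, List.length_append, List.length_map, List.length_range, ih,
        List.length_cons, List.length_nil]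
      omega

theorem forStep_getD_zero (x : α) (css : List (List (List α))) :
    (forStep x css).getD 0 [] = [[]] := rfl

theorem forStep_getD_succ (x : α) (css : List (List (List α))) (i : ℕ)
    (h : i < css.length - 1) :
    (forStep x css).getD (i+1) [] = (css.getD i []).map (x :: ·) ++ css.getD (i+1) [] := by
  have h' : i < ((List.range (css.length - 1)).map
      (fun i => (css.getD i []).map (x :: ·) ++ css.getD (i+1) [])).length := by simpa using h
  simp only [forStep, List.singleton_append, List.getD_cons_succ]
  rw [List.getD_eq_getElem _ _ h', List.getElem_map, List.getElem_range]

theorem kcombs_nil_getD_succ (D i : ℕ) : (kcombs D ([] : List α)).getD (i+1) [] = [] := by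
  show (([[]] : List (List α)) :: List.replicate D []).getD (i+1) [] = []
  exact getD_replicate' _ D i

theorem kcombs_getD_perm (D : ℕ) : ∀ (xs : List α) (i : ℕ), i ≤ D →
    ((kcombs D xs).getD i []).Perm (List.sublistsLen i xs)
  | [], 0, _ => by simp [kcombs]
  | [], i+1, _ => by
      rw [kcombs_nil_getD_succ, List.sublistsLen_of_length_lt (by simp)]
  | x :: xs, 0, _ => by
      rw [kcombs_cons, forStep_getD_zero, List.sublistsLen_zero]
  | x :: xs, i+1, hi => by
      rw [kcombs_cons, forStep_getD_succ x _ i (by rw [kcombs_length]; omega),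
        List.sublistsLen_succ_cons]
      have h1 := kcombs_getD_perm D xs i (by omega)
      have h2 := kcombs_getD_perm D xs (i+1) hi
      exact ((h1.map _).append h2).trans List.perm_append_comm

theorem setEmpty_forStep (x : α) (D : ℕ) (hD : 1 ≤ D) (cs : List (List (List α)))
    (hlen : cs.length = D + 1) :
    setEmpty D (forStep x (setEmpty D cs)) = setEmpty D (forStep x cs) := by
  have hl1 : (setEmpty D cs).length = D + 1 := by simp [setEmpty, hlen]
  apply List.ext_getElem
  · simp [setEmpty, forStep, hlen, hl1]
  · intro n h1 h2
    have hn : n < D + 1 := by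
      simpa [setEmpty, forStep, hlen, hl1] using h1
    by_cases hnD : n = D
    · subst hnD
      simp [setEmpty, List.getElem_set_self]
    · simp only [setEmpty] at h1 h2 ⊢
      rw [List.getElem_set_ne (by omega), List.getElem_set_ne (by omega)]
      have hb1 : n < (forStep x (cs.set D [])).length := by
        simpa [setEmpty] using h1
      have hb2 : n < (forStep x cs).length := by simpa [setEmpty] using h2
      rw [← List.getD_eq_getElem _ [] hb1, ← List.getD_eq_getElem _ [] hb2]
      cases n with
      | zero => rw [forStep_getD_zero, forStep_getD_zero]
      | succ m =>
          rw [forStep_getD_succ x _ m (by rw [List.length_set, hlen]; omega),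
            forStep_getD_succ x _ m (by rw [hlen]; omega),
            getD_set_ne _ _ _ _ _ (by omega), getD_set_ne _ _ _ _ _ (by omega)]

theorem nested_fst (K D : ℕ) (hD : 1 ≤ D) :
    ∀ xs : List α, (nestedPerms K D xs).1 = setEmpty D (kcombs D xs)
  | [] => by
      obtain ⟨D', rfl⟩ : ∃ D', D = D' + 1 := ⟨D - 1, by omega⟩
      simp only [nestedPerms, kcombs, setEmpty, List.singleton_append, List.set_cons_succ,
        List.set_replicate_self]
  | x :: xs => by
      show setEmpty D (forStep x (nestedPerms K D xs).1) = _
      rw [nested_fst K D hD xs, kcombs_cons,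
        setEmpty_forStep x D hD _ (kcombs_length D xs)]

end Helpers5
section Final
variable {α : Type*}

theorem nestedPerms_cons (K Dd : ℕ) (x : α) (xs : List α) :
    nestedPerms K Dd (x :: xs) =
      (setEmpty Dd (forStep x (nestedPerms K Dd xs).1),
        if ((forStep x (nestedPerms K Dd xs).1).getD Dd []).isEmpty
        then [[[]]] ++ List.replicate K []
        else convolM (nestedPerms K Dd xs).2
          (kperms K ((forStep x (nestedPerms K Dd xs).1).getD Dd []))) := rfl

theorem nested_snd_len (K Dd : ℕ) (hK : 1 ≤ K) :
    ∀ xs : List α, (nestedPerms K Dd xs).2.length = K + 1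
  | [] => by simp [nestedPerms]
  | x :: xs => by
      have ih := nested_snd_len K Dd hK xs
      rw [nestedPerms_cons]
      dsimp only
      split
      · simp
      · simp only [convolM, List.length_map, List.length_range, ih]

theorem nestedPerms_correct' (K Dd : ℕ) (hK : 1 ≤ K) (hD : 2 ≤ Dd) (xs : List α) :
    (nestedPerms K Dd xs).1 = setEmpty Dd (kcombs Dd xs) ∧
      ∀ k ≤ K,
        (((nestedPerms K Dd xs).2).getD k []).Perm
          ((kperms K ((kcombs Dd xs).getD Dd [])).getD k []) := by
  refine ⟨nested_fst K Dd (by omega) xs, ?_⟩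
  induction xs with
  | nil =>
      intro k hk
      have h1 : (kcombs Dd ([] : List α)).getD Dd [] = [] := by
        obtain ⟨D', rfl⟩ : ∃ D', Dd = D' + 1 := ⟨Dd - 1, by omega⟩
        exact kcombs_nil_getD_succ _ _
      rw [h1]
      have h2 : kperms K ([] : List (List α)) = [[[]]] ++ List.replicate K [] := by
        simp [kperms]
      have h3 : (nestedPerms K Dd ([] : List α)).2 = [[[]]] ++ List.replicate K [] := by
        simp [nestedPerms]
      rw [h2, h3]
  | cons x xs ih =>
      intro k hk
      have hfst := nested_fst K Dd (by omega : 1 ≤ Dd) xs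
      rw [nestedPerms_cons]
      dsimp only
      rw [hfst]
      have hlen : (kcombs Dd xs).length = Dd + 1 := kcombs_length Dd xs
      have hset_len : (setEmpty Dd (kcombs Dd xs)).length = Dd + 1 := by
        simp [setEmpty, hlen]
      obtain ⟨D', rfl⟩ : ∃ D', Dd = D' + 1 := ⟨Dd - 1, by omega⟩
      have hgetD : (forStep x (setEmpty (D'+1) (kcombs (D'+1) xs))).getD (D'+1) []
          = ((kcombs (D'+1) xs).getD D' []).map (x :: ·) := by
        rw [forStep_getD_succ x _ D' (by rw [hset_len]; omega)]
        unfold setEmpty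
        rw [getD_set_ne _ _ _ _ _ (by omega), getD_set_self _ _ _ _ (by rw [hlen]; omega),
          List.append_nil]
      have hcombo : (kcombs (D'+1) (x::xs)).getD (D'+1) []
          = ((kcombs (D'+1) xs).getD D' []).map (x :: ·)
            ++ (kcombs (D'+1) xs).getD (D'+1) [] := by
        rw [kcombs_cons, forStep_getD_succ x _ D' (by rw [hlen]; omega)]
      rw [hgetD]
      by_cases hemp : (((kcombs (D'+1) xs).getD D' []).map (x :: ·)).isEmpty
      · rw [if_pos hemp]
        have hnil : (kcombs (D'+1) xs).getD D' [] = [] := by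
          simpa [List.isEmpty_iff] using hemp
        have hsl : List.sublistsLen D' xs = [] := by
          have p := kcombs_getD_perm (D'+1) xs D' (by omega)
          rw [hnil] at p
          exact List.perm_nil.mp p.symm
        have hlt : xs.length < D' := by
          have hcg := congrArg List.length hsl
          simp only [List.length_sublistsLen, List.length_nil] at hcg
          exact Nat.choose_eq_zero_iff.mp hcg
        have hnil2 : (kcombs (D'+1) xs).getD (D'+1) [] = [] := by
          have p := kcombs_getD_perm (D'+1) xs (D'+1) (le_refl _)
          rw [List.sublistsLen_of_length_lt (by omega)] at p
          exact List.perm_nil.mp p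
        rw [hcombo, hnil, hnil2]
        simp only [List.map_nil, List.append_nil]
        rw [show kperms K ([] : List (List α)) = [[[]]] ++ List.replicate K [] by
          simp [kperms]]
      · rw [if_neg hemp, hcombo]
        exact convolM_kperms K hK _ _ _ (nested_snd_len K (D'+1) hK xs) ih k hk

end Final

/-- Fusion correctness of the sequential nested permutation-combination generator. -/
theorem nestedPerms_correct (K Dd : ℕ) (hK : 1 ≤ K) (hD : 2 ≤ Dd) (xs : List α) :
    (nestedPerms K Dd xs).1 = setEmpty Dd (kcombs Dd xs) ∧
      ∀ k ≤ K,
        (((nestedPerms K Dd xs).2).getD k []).Perm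
          ((kperms K ((kcombs Dd xs).getD Dd [])).getD k []) :=
  nestedPerms_correct' K Dd hK hD xs
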